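/- For π-reversible P and an orbit partition of X, the KL divergence of (GPG)^l from Π is bounded by (1 − α(P̄²))^l · H(π̄), where α denotes the log-Sobolev constant and H the Shannon entropy. -/

import Mathlib

open Finset Matrix

namespace GpgStmt

noncomputable section

variable {X : Type*}

/-- Matrix with all rows equal to π. -/
def Pimat {X : Type*} (π : X → ℝ) : Matrix X X ℝ := Matrix.of fun _ y => π y

def IsStochastic [Fintype X] (P : Matrix X X ℝ) : Prop :=
  (∀ x y, 0 ≤ P x y) ∧ ∀ x, ∑ y, P x y = 1

/-- π-stationary transition matrix. -/
def IsStationary [Fintype X] (π : X → ℝ) (P : Matrix X X ℝ) : Prop :=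
  IsStochastic P ∧ ∀ y, ∑ x, π x * P x y = π y

/-- π-reversible transition matrix. -/
def IsReversible [Fintype X] (π : X → ℝ) (P : Matrix X X ℝ) : Prop :=
  IsStochastic P ∧ ∀ x y, π x * P x y = π y * P y x

/-- mass of the orbit O_i = {x | o x = i}. -/
def orbMass [Fintype X] {k : ℕ} (π : X → ℝ) (o : X → Fin k) (i : Fin k) : ℝ :=
  ∑ x ∈ Finset.filter (fun x => o x = i) Finset.univ, π x

/-- Gibbs kernel of the orbit partition induced by o. -/
def gibbs [Fintype X] {k : ℕ} (π : X → ℝ) (o : X → Fin k) : Matrix X X ℝ :=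
  Matrix.of fun x y => if o x = o y then π y / orbMass π o (o x) else 0

/-- Projection chain P̄ of P with respect to the orbit partition induced by o. -/
def projChain [Fintype X] {k : ℕ} (π : X → ℝ) (o : X → Fin k) (P : Matrix X X ℝ) :
    Matrix (Fin k) (Fin k) ℝ :=
  Matrix.of fun i j => (1 / orbMass π o i) *
    ∑ x ∈ Finset.filter (fun x => o x = i) Finset.univ,
      ∑ y ∈ Finset.filter (fun y => o y = j) Finset.univ, π x * P x y

/-- π-weighted KL divergence between transition matrices, with 0·log(0/a) = 0. -/
def klDiv {X : Type*} [Fintype X] (π : X → ℝ) (Q R : Matrix X X ℝ) : ℝ :=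
  ∑ x, ∑ y, π x * Q x y * Real.log (Q x y / R x y)

/-- ℓ²(π)-adjoint of a matrix. -/
def piAdj [Fintype X] (π : X → ℝ) (M : Matrix X X ℝ) : Matrix X X ℝ :=
  Matrix.of fun x y => π y * M y x / π x

/-- squared π-weighted Frobenius norm ‖M‖²_{F,π} = Tr(M*M). -/
def frobSq [Fintype X] (π : X → ℝ) (M : Matrix X X ℝ) : ℝ :=
  Matrix.trace (piAdj π M * M)

/-- π-mass of a finite set. -/
def mass [Fintype X] (π : X → ℝ) (S : Finset X) : ℝ := ∑ x ∈ S, π x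

/-- Two-block Gibbs kernel G_S for the partition X = S ⊔ Sᶜ. -/
def gibbsTwo [Fintype X] [DecidableEq X] (π : X → ℝ) (S : Finset X) : Matrix X X ℝ :=
  Matrix.of fun x y =>
    if x ∈ S then (if y ∈ S then π y / mass π S else 0)
    else (if y ∈ S then 0 else π y / mass π Sᶜ)

/-- g(S) = (1/(π(S)π(S'))) Σ_{x∈S,y∈S'} π(x) P²(x,y). -/
def gfun [Fintype X] [DecidableEq X] (π : X → ℝ) (P : Matrix X X ℝ) (S : Finset X) : ℝ :=
  (1 / (mass π S * mass π Sᶜ)) * ∑ x ∈ S, ∑ y ∈ Sᶜ, π x * (P * P) x y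

/-- h(S) = (1/π(S)) Σ_{x∈S,y∈S'} π(x) P²(x,y). -/
def hfun [Fintype X] [DecidableEq X] (π : X → ℝ) (P : Matrix X X ℝ) (S : Finset X) : ℝ :=
  (1 / mass π S) * ∑ x ∈ S, ∑ y ∈ Sᶜ, π x * (P * P) x y

/-- Ergodicity (primitivity): some power of P has all entries positive. -/
def IsErgodic [Fintype X] [DecidableEq X] (P : Matrix X X ℝ) : Prop :=
  ∃ m : ℕ, ∀ x y, 0 < (P ^ m) x y

/-- Shannon entropy of π. -/
def shannonEnt [Fintype X] (π : X → ℝ) : ℝ := -∑ x, π x * Real.log (π x)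

/-- Entropy rate H_π(Q). -/
def entRate [Fintype X] (π : X → ℝ) (Q : Matrix X X ℝ) : ℝ :=
  -∑ x, ∑ y, π x * Q x y * Real.log (Q x y)

/-- Supermodular set function on 2^X. -/
def Supermodular {X : Type*} [DecidableEq X] (F : Finset X → ℝ) : Prop :=
  ∀ A B : Finset X, F A + F B ≤ F (A ∩ B) + F (A ∪ B)

/-- Submodular set function on 2^X. -/
def Submodular {X : Type*} [DecidableEq X] (F : Finset X → ℝ) : Prop :=
  ∀ A B : Finset X, F (A ∩ B) + F (A ∪ B) ≤ F A + F B

/-- L(f) = Σ_x |f(x)|² log(|f(x)|²/‖f‖²_π) π(x). -/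
def entFunc [Fintype X] (π : X → ℝ) (f : X → ℝ) : ℝ :=
  ∑ x, (f x) ^ 2 * Real.log ((f x) ^ 2 / (∑ z, (f z) ^ 2 * π z)) * π x

/-- Dirichlet form ⟨(I−Q)f, f⟩_π. -/
def dirichletForm [Fintype X] (π : X → ℝ) (Q : Matrix X X ℝ) (f : X → ℝ) : ℝ :=
  ∑ x, (f x - ∑ y, Q x y * f y) * f x * π x

/-- log-Sobolev constant α(Q). -/
def logSobolev [Fintype X] (π : X → ℝ) (Q : Matrix X X ℝ) : ℝ :=
  sInf {r : ℝ | ∃ f : X → ℝ, entFunc π f ≠ 0 ∧ r = dirichletForm π Q f / entFunc π f}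

/-!
With `U = orbInd o`, `U x i = [o x = i]`, and `V = orbAvg π o`, `V i y = [o y = i] π y / π̄ i`,
one has `G = U V`, `P̄ = V P U` and `V U = 1`, so `(GPG)^l = U P̄^l V` for `l ≥ 1`, and the
divergence of `(GPG)^l` from `Π` collapses to `∑ j, π̄ j · Ent_π̄ (P̄^l e_j / π̄ j)`, an average of
entropies of column densities of `P̄^l`. Each application of `P̄` contracts `Ent_π̄` by the factor
`1 - α(P̄²)`: the inequality `Ent Z ≥ E Z - (E √Z)²`, applied to each row of `P̄`, gives
`Ent (P̄ f) ≤ Ent f - (1 - ‖P̄ √f‖²)` for a density `f`, and `1 - ‖P̄ √f‖²` is the Dirichlet form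
of `P̄²` at `√f`, which the log-Sobolev inequality bounds below by `α(P̄²) Ent f`. Since
`Ent (e_j / π̄ j) = -log π̄ j`, averaging over `j` yields the Shannon entropy of `π̄`.
-/

section LogSobolev

open Real

theorem sub_le_mul_log_div {a b : ℝ} (ha : 0 ≤ a) (hb : 0 < b) : a - b ≤ a * log (a / b) := by
  have h := mul_nonneg hb.le (InformationTheory.klFun_nonneg (div_nonneg ha hb.le))
  rw [InformationTheory.klFun_apply] at h
  have e : b * (a / b * log (a / b) + 1 - a / b) = a * log (a / b) + b - a := by
    field_simp
  linarith

theorem two_mul_sub_le_mul_log_div {a b : ℝ} (ha : 0 ≤ a) (hb : 0 < b) :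
    2 * a - 2 * √a * √b ≤ a * log (a / b) := by
  have key := mul_le_mul_of_nonneg_left (sub_le_mul_log_div (sqrt_nonneg a) (sqrt_pos.2 hb))
    (by positivity : (0 : ℝ) ≤ 2 * √a)
  have hdiv : a / b = (√a / √b) ^ 2 := by rw [div_pow, sq_sqrt ha, sq_sqrt hb.le]
  rw [hdiv, log_pow]
  push_cast
  linear_combination key + (2 * log (√a / √b) - 2) * mul_self_sqrt ha

variable {ι : Type*} [Fintype ι]

section Weighted

variable {ν Z : ι → ℝ}

theorem sum_mul_mul_log_div_sum (hν : 0 ≤ ν) (hZ : 0 ≤ Z) :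
    ∑ i, ν i * (Z i * log (Z i / ∑ j, ν j * Z j))
      = ∑ i, ν i * (Z i * log (Z i)) - (∑ j, ν j * Z j) * log (∑ j, ν j * Z j) := by
  set m := ∑ j, ν j * Z j
  have hm0 : 0 ≤ m := Finset.sum_nonneg fun j _ => mul_nonneg (hν j) (hZ j)
  rcases hm0.eq_or_lt with hm | hm
  · have hzero := (Finset.sum_eq_zero_iff_of_nonneg fun j _ => mul_nonneg (hν j) (hZ j)).1 hm.symm
    rw [← hm, zero_mul, sub_zero]
    refine Finset.sum_congr rfl fun i hi => ?_
    rcases mul_eq_zero.1 (hzero i hi) with h | h <;> simp [h]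
  · rw [Finset.sum_mul, ← Finset.sum_sub_distrib]
    refine Finset.sum_congr rfl fun i _ => ?_
    rcases (hZ i).eq_or_lt with h | h
    · simp [← h]
    · rw [log_div h.ne' hm.ne']; ring

theorem sum_mul_sub_sq_sum_mul_sqrt_le (hν : 0 ≤ ν) (hZ : 0 ≤ Z) :
    ∑ i, ν i * Z i - (∑ i, ν i * √(Z i)) ^ 2 ≤ ∑ i, ν i * (Z i * log (Z i / ∑ j, ν j * Z j)) := by
  set m := ∑ j, ν j * Z j with hm_def
  set s := ∑ i, ν i * √(Z i) with hs_def
  have hm0 : 0 ≤ m := Finset.sum_nonneg fun j _ => mul_nonneg (hν j) (hZ j)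
  rcases hm0.eq_or_lt with hm | hm
  · simp only [← hm, div_zero, log_zero, mul_zero, Finset.sum_const_zero, zero_sub]
    exact neg_nonpos.2 (sq_nonneg s)
  have hsum : 2 * m - 2 * √m * s ≤ ∑ i, ν i * (Z i * log (Z i / m)) := by
    calc 2 * m - 2 * √m * s = ∑ i, ν i * (2 * Z i - 2 * √(Z i) * √m) := by
          rw [hm_def, hs_def, Finset.mul_sum, Finset.mul_sum, ← Finset.sum_sub_distrib]
          exact Finset.sum_congr rfl fun i _ => by ring
      _ ≤ _ := Finset.sum_le_sum fun i _ =>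
          mul_le_mul_of_nonneg_left (two_mul_sub_le_mul_log_div (hZ i) hm) (hν i)
  nlinarith [sq_nonneg (√m - s), sq_sqrt hm.le]

theorem sq_sum_mul_le_sum_mul_sq (hν : 0 ≤ ν) (hν1 : ∑ i, ν i = 1) (g : ι → ℝ) :
    (∑ i, ν i * g i) ^ 2 ≤ ∑ i, ν i * g i ^ 2 := by
  simpa only [smul_eq_mul] using (even_two.convexOn_pow (𝕜 := ℝ)).map_sum_le
    (t := Finset.univ) (fun i _ => hν i) hν1 (fun i _ => Set.mem_univ (g i))

end Weighted

/-- `Ent_w f`; for a density `f = μ / w` this is `D_KL(μ ‖ w)`. -/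
def ent (w f : ι → ℝ) : ℝ := ∑ i, w i * (f i * log (f i))

section Reversible

variable {w : ι → ℝ} {Q : Matrix ι ι ℝ}

theorem IsReversible.vecMul_eq (hQ : IsReversible w Q) : w ᵥ* Q = w := by
  ext j
  calc (w ᵥ* Q) j = ∑ i, w j * Q j i := Finset.sum_congr rfl fun i _ => hQ.2 i j
    _ = w j := by rw [← Finset.mul_sum, hQ.1.2 j, mul_one]

theorem IsReversible.sum_mul_mulVec (hQ : IsReversible w Q) (g : ι → ℝ) :
    ∑ i, w i * (Q *ᵥ g) i = ∑ i, w i * g i := by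
  change w ⬝ᵥ (Q *ᵥ g) = w ⬝ᵥ g
  rw [dotProduct_mulVec, hQ.vecMul_eq]

theorem IsReversible.sum_mul_mulVec_mul (hQ : IsReversible w Q) (u v : ι → ℝ) :
    ∑ i, w i * (Q *ᵥ u) i * v i = ∑ i, w i * u i * (Q *ᵥ v) i := by
  simp only [mulVec, dotProduct, Finset.mul_sum, Finset.sum_mul]
  rw [Finset.sum_comm]
  refine Finset.sum_congr rfl fun j _ => Finset.sum_congr rfl fun i _ => ?_
  linear_combination (u j * v i) * hQ.2 i j

theorem IsReversible.sum_mul_mulVec_sq_le (hQ : IsReversible w Q) (hw : 0 ≤ w) (g : ι → ℝ) :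
    ∑ i, w i * (Q *ᵥ g) i ^ 2 ≤ ∑ i, w i * g i ^ 2 :=
  calc ∑ i, w i * (Q *ᵥ g) i ^ 2 ≤ ∑ i, w i * (Q *ᵥ (g ^ 2)) i :=
        Finset.sum_le_sum fun i _ => mul_le_mul_of_nonneg_left
          (sq_sum_mul_le_sum_mul_sq (hQ.1.1 i) (hQ.1.2 i) g) (hw i)
    _ = ∑ i, w i * g i ^ 2 := hQ.sum_mul_mulVec _

theorem sum_sq_mul_sub_sq_le_entFunc (hw : 0 ≤ w) (g : ι → ℝ) :
    ∑ i, w i * g i ^ 2 - (∑ i, w i * |g i|) ^ 2 ≤ entFunc w g := by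
  have h := sum_mul_sub_sq_sum_mul_sqrt_le hw (fun i => sq_nonneg (g i))
  simp only [sqrt_sq_eq_abs] at h
  simp only [entFunc, mul_comm _ (w _)]
  convert h using 3 with i

theorem entFunc_nonneg (hw : 0 ≤ w) (hw1 : ∑ i, w i = 1) (g : ι → ℝ) : 0 ≤ entFunc w g := by
  have h := sq_sum_mul_le_sum_mul_sq hw hw1 fun i => |g i|
  simp only [sq_abs] at h
  linarith [sum_sq_mul_sub_sq_le_entFunc hw g]

variable [DecidableEq ι]

theorem IsReversible.dirichletForm_sq (hQ : IsReversible w Q) (g : ι → ℝ) :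
    dirichletForm w (Q ^ 2) g = ∑ i, w i * g i ^ 2 - ∑ i, w i * (Q *ᵥ g) i ^ 2 := by
  have h := hQ.sum_mul_mulVec_mul (Q *ᵥ g) g
  change ∑ i, (g i - (Q ^ 2 *ᵥ g) i) * g i * w i = _
  rw [sq Q, ← mulVec_mulVec]
  simp only [sub_mul, Finset.sum_sub_distrib]
  congr 1
  · exact Finset.sum_congr rfl fun i _ => by ring
  · calc _ = ∑ i, w i * (Q *ᵥ Q *ᵥ g) i * g i := Finset.sum_congr rfl fun i _ => by ring
      _ = _ := h.trans (Finset.sum_congr rfl fun i _ => by ring)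

theorem IsReversible.dirichletForm_sq_nonneg (hQ : IsReversible w Q) (hw : 0 ≤ w)
    (g : ι → ℝ) : 0 ≤ dirichletForm w (Q ^ 2) g := by
  rw [hQ.dirichletForm_sq]
  linarith [hQ.sum_mul_mulVec_sq_le hw g]

theorem IsReversible.dirichletForm_sq_le_entFunc (hQ : IsReversible w Q) (hw : 0 ≤ w)
    (hw1 : ∑ i, w i = 1) {g : ι → ℝ} (hg : 0 ≤ g) :
    dirichletForm w (Q ^ 2) g ≤ entFunc w g := by
  have hjensen := sq_sum_mul_le_sum_mul_sq hw hw1 (Q *ᵥ g)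
  have hent := sum_sq_mul_sub_sq_le_entFunc hw g
  simp only [abs_of_nonneg (hg _)] at hent
  rw [hQ.sum_mul_mulVec] at hjensen
  rw [hQ.dirichletForm_sq]
  linarith

theorem IsReversible.logSobolev_sq_le_div (hQ : IsReversible w Q) (hw : 0 ≤ w)
    (hw1 : ∑ i, w i = 1) {g : ι → ℝ} (hg : entFunc w g ≠ 0) :
    logSobolev w (Q ^ 2) ≤ dirichletForm w (Q ^ 2) g / entFunc w g := by
  refine csInf_le ⟨0, ?_⟩ ⟨g, hg, rfl⟩
  rintro r ⟨f, -, rfl⟩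
  exact div_nonneg (hQ.dirichletForm_sq_nonneg hw f) (entFunc_nonneg hw hw1 f)

theorem IsReversible.logSobolev_sq_mul_entFunc_le (hQ : IsReversible w Q) (hw : 0 ≤ w)
    (hw1 : ∑ i, w i = 1) (g : ι → ℝ) :
    logSobolev w (Q ^ 2) * entFunc w g ≤ dirichletForm w (Q ^ 2) g := by
  by_cases hg : entFunc w g = 0
  · rw [hg, mul_zero]
    exact hQ.dirichletForm_sq_nonneg hw g
  · have hpos := (entFunc_nonneg hw hw1 g).lt_of_ne' hg
    exact (le_div_iff₀ hpos).1 (hQ.logSobolev_sq_le_div hw hw1 hg)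

theorem IsReversible.logSobolev_sq_le_one (hQ : IsReversible w Q) (hw : 0 ≤ w)
    (hw1 : ∑ i, w i = 1) : logSobolev w (Q ^ 2) ≤ 1 := by
  rcases Set.eq_empty_or_nonempty
    {r | ∃ f : ι → ℝ, entFunc w f ≠ 0 ∧ r = dirichletForm w (Q ^ 2) f / entFunc w f}
    with hempty | ⟨-, f, hf, -⟩
  · rw [logSobolev, hempty, Real.sInf_empty]
    exact zero_le_one
  have habs : entFunc w (fun i => |f i|) = entFunc w f := by simp only [entFunc, sq_abs]
  rw [← habs] at hf
  refine (hQ.logSobolev_sq_le_div hw hw1 hf).trans (div_le_one_of_le₀ ?_ ?_)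
  · exact hQ.dirichletForm_sq_le_entFunc hw hw1 fun i => abs_nonneg (f i)
  · exact entFunc_nonneg hw hw1 _

theorem IsReversible.ent_mulVec_le (hQ : IsReversible w Q) (hw : 0 ≤ w) (hw1 : ∑ i, w i = 1)
    {f : ι → ℝ} (hf : 0 ≤ f) (hf1 : ∑ i, w i * f i = 1) :
    ent w (Q *ᵥ f) ≤ (1 - logSobolev w (Q ^ 2)) * ent w f := by
  set g : ι → ℝ := fun i => √(f i)
  have hrow : ∀ j, (Q *ᵥ f) j - (Q *ᵥ g) j ^ 2
      ≤ (Q *ᵥ fun i => f i * log (f i)) j - (Q *ᵥ f) j * log ((Q *ᵥ f) j) := fun j => by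
    have := sum_mul_sub_sq_sum_mul_sqrt_le (hQ.1.1 j) hf
    rwa [sum_mul_mul_log_div_sum (hQ.1.1 j) hf] at this
  have hsum : ∑ i, w i * f i - ∑ i, w i * (Q *ᵥ g) i ^ 2
      ≤ ent w f - ent w (Q *ᵥ f) := by
    rw [ent, ent, ← hQ.sum_mul_mulVec f, ← hQ.sum_mul_mulVec fun i => f i * log (f i),
      ← Finset.sum_sub_distrib, ← Finset.sum_sub_distrib]
    exact Finset.sum_le_sum fun j _ => by
      rw [← mul_sub, ← mul_sub]; exact mul_le_mul_of_nonneg_left (hrow j) (hw j)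
  have hg : ∀ i, g i ^ 2 = f i := fun i => sq_sqrt (hf i)
  have hlsi := hQ.logSobolev_sq_mul_entFunc_le hw hw1 g
  have hnorm : ∑ i, f i * w i = 1 := by simpa only [mul_comm] using hf1
  rw [hQ.dirichletForm_sq] at hlsi
  simp only [entFunc, hg, hnorm, div_one] at hlsi
  have hent : ∑ i, f i * log (f i) * w i = ent w f :=
    Finset.sum_congr rfl fun i _ => mul_comm _ _
  rw [hent] at hlsi
  linarith

theorem IsReversible.ent_pow_mulVec_le (hQ : IsReversible w Q) (hw : 0 ≤ w)
    (hw1 : ∑ i, w i = 1) (l : ℕ) {f : ι → ℝ} (hf : 0 ≤ f) (hf1 : ∑ i, w i * f i = 1) :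
    ent w (Q ^ l *ᵥ f) ≤ (1 - logSobolev w (Q ^ 2)) ^ l * ent w f := by
  induction l generalizing f with
  | zero => simp
  | succ l ih =>
    have hQf : 0 ≤ Q *ᵥ f := fun i => Finset.sum_nonneg fun m _ => mul_nonneg (hQ.1.1 i m) (hf m)
    have hgap : 0 ≤ 1 - logSobolev w (Q ^ 2) := sub_nonneg.2 (hQ.logSobolev_sq_le_one hw hw1)
    calc ent w (Q ^ (l + 1) *ᵥ f) = ent w (Q ^ l *ᵥ Q *ᵥ f) := by rw [pow_succ, mulVec_mulVec]
      _ ≤ (1 - logSobolev w (Q ^ 2)) ^ l * ent w (Q *ᵥ f) :=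
        ih hQf (by rw [hQ.sum_mul_mulVec, hf1])
      _ ≤ (1 - logSobolev w (Q ^ 2)) ^ l * ((1 - logSobolev w (Q ^ 2)) * ent w f) :=
        mul_le_mul_of_nonneg_left (hQ.ent_mulVec_le hw hw1 hf hf1) (pow_nonneg hgap l)
      _ = (1 - logSobolev w (Q ^ 2)) ^ (l + 1) * ent w f := by ring

theorem IsReversible.ent_pow_col_div_le (hQ : IsReversible w Q) (hw : ∀ i, 0 < w i)
    (hw1 : ∑ i, w i = 1) (l : ℕ) (j : ι) :
    ent w (fun i => (Q ^ l) i j / w j) ≤ (1 - logSobolev w (Q ^ 2)) ^ l * -log (w j) := by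
  have hcol : (fun i => (Q ^ l) i j / w j) = Q ^ l *ᵥ Pi.single j (w j)⁻¹ := by
    ext i
    simp [mulVec, dotProduct_single, div_eq_mul_inv]
  have hsingle : ent w (Pi.single j (w j)⁻¹) = -log (w j) := by
    rw [ent, Fintype.sum_eq_single j fun i hi => by simp [hi]]
    simp [(hw j).ne']
  rw [hcol, ← hsingle]
  refine hQ.ent_pow_mulVec_le (fun i => (hw i).le) hw1 l ?_ ?_
  · exact Pi.single_nonneg.2 (inv_nonneg.2 (hw j).le)
  · rw [Fintype.sum_eq_single j fun i hi => by simp [hi]]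
    simp [(hw j).ne']

theorem IsReversible.sum_mul_ent_pow_col_div_le (hQ : IsReversible w Q) (hw : ∀ i, 0 < w i)
    (hw1 : ∑ i, w i = 1) (l : ℕ) :
    ∑ j, w j * ent w (fun i => (Q ^ l) i j / w j)
      ≤ (1 - logSobolev w (Q ^ 2)) ^ l * shannonEnt w :=
  calc ∑ j, w j * ent w (fun i => (Q ^ l) i j / w j)
      ≤ ∑ j, w j * ((1 - logSobolev w (Q ^ 2)) ^ l * -log (w j)) :=
        Finset.sum_le_sum fun j _ =>
          mul_le_mul_of_nonneg_left (hQ.ent_pow_col_div_le hw hw1 l j) (hw j).le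
    _ = (1 - logSobolev w (Q ^ 2)) ^ l * shannonEnt w := by
        rw [shannonEnt, mul_neg, Finset.mul_sum, ← Finset.sum_neg_distrib]
        exact Finset.sum_congr rfl fun j _ => by ring

end Reversible

end LogSobolev

theorem pow_succ_mul_mul_of_mul_eq_one {m n R : Type*} [Fintype m] [DecidableEq m]
    [Fintype n] [DecidableEq n] [Semiring R] {U : Matrix m n R} {V : Matrix n m R}
    (hVU : V * U = 1) (A : Matrix n n R) (l : ℕ) :
    (U * A * V) ^ (l + 1) = U * A ^ (l + 1) * V := by
  induction l with
  | zero => simp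
  | succ l ih =>
    calc (U * A * V) ^ (l + 1 + 1) = U * A ^ (l + 1) * (V * U) * A * V := by
          rw [pow_succ, ih]; simp only [Matrix.mul_assoc]
      _ = U * A ^ (l + 1 + 1) * V := by
          rw [hVU, Matrix.mul_one, pow_succ A (l + 1)]; simp only [Matrix.mul_assoc]

section Orbits

variable [Fintype X] {k : ℕ} {π : X → ℝ} {o : X → Fin k}

def orbInd (o : X → Fin k) : Matrix X (Fin k) ℝ := Matrix.of fun x i => if o x = i then 1 else 0

def orbAvg (π : X → ℝ) (o : X → Fin k) : Matrix (Fin k) X ℝ :=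
  Matrix.of fun i y => if o y = i then π y / orbMass π o i else 0

theorem sum_mul_comp_eq_sum_orbMass_mul (π : X → ℝ) (o : X → Fin k) (F : Fin k → ℝ) :
    ∑ x, π x * F (o x) = ∑ i, orbMass π o i * F i := by
  rw [← Finset.sum_fiberwise Finset.univ o]
  refine Finset.sum_congr rfl fun i _ => ?_
  rw [orbMass, Finset.sum_mul]
  exact Finset.sum_congr rfl fun x hx => by rw [(Finset.mem_filter.1 hx).2]

theorem sum_orbMass (π : X → ℝ) (o : X → Fin k) : ∑ i, orbMass π o i = ∑ x, π x :=
  Finset.sum_fiberwise Finset.univ o π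

theorem orbMass_pos (hπ : ∀ x, 0 < π x) (ho : Function.Surjective o) (i : Fin k) :
    0 < orbMass π o i := by
  obtain ⟨x, rfl⟩ := ho i
  exact Finset.sum_pos (fun y _ => hπ y) ⟨x, by simp⟩

theorem gibbs_eq_orbInd_mul_orbAvg : gibbs π o = orbInd o * orbAvg π o := by
  ext x y
  simp only [gibbs, orbInd, orbAvg, mul_apply, of_apply, ite_mul, one_mul, zero_mul,
    Finset.sum_ite_eq, Finset.mem_univ, if_true]
  rcases eq_or_ne (o x) (o y) with h | h
  · simp [h]
  · simp [h, h.symm]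

theorem projChain_eq_orbAvg_mul_mul_orbInd (P : Matrix X X ℝ) :
    projChain π o P = orbAvg π o * P * orbInd o := by
  ext i j
  simp only [projChain, orbAvg, orbInd, mul_apply, of_apply, mul_ite, ite_mul, mul_one, mul_zero,
    zero_mul, ← Finset.sum_filter, Finset.mul_sum]
  refine Finset.sum_comm.trans (Finset.sum_congr rfl fun y _ => Finset.sum_congr rfl fun x _ => ?_)
  ring

theorem orbAvg_mul_orbInd (hw : ∀ i, orbMass π o i ≠ 0) : orbAvg π o * orbInd o = 1 := by
  ext i j
  simp only [orbAvg, orbInd, mul_apply, of_apply, one_apply, mul_ite, mul_one, mul_zero]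
  split_ifs with hij
  · subst hij
    rw [← Finset.sum_filter, Finset.sum_congr rfl fun y hy => if_pos (Finset.mem_filter.1 hy).2,
      ← Finset.sum_div, ← orbMass, div_self (hw i)]
  · exact Finset.sum_eq_zero fun y _ => by split_ifs with h1 h2 <;> simp_all

theorem orbInd_mul_mul_orbAvg_apply (B : Matrix (Fin k) (Fin k) ℝ) (x z : X) :
    (orbInd o * B * orbAvg π o) x z = B (o x) (o z) * π z / orbMass π o (o z) := by
  simp [orbInd, orbAvg, mul_apply, mul_div_assoc]

theorem gibbs_mul_mul_gibbs_pow [DecidableEq X] (hw : ∀ i, orbMass π o i ≠ 0)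
    (P : Matrix X X ℝ) (l : ℕ) :
    (gibbs π o * P * gibbs π o) ^ (l + 1) = orbInd o * projChain π o P ^ (l + 1) * orbAvg π o := by
  have h : gibbs π o * P * gibbs π o = orbInd o * projChain π o P * orbAvg π o := by
    simp only [gibbs_eq_orbInd_mul_orbAvg, projChain_eq_orbAvg_mul_mul_orbInd, Matrix.mul_assoc]
  rw [h, pow_succ_mul_mul_of_mul_eq_one (orbAvg_mul_orbInd hw)]

theorem klDiv_orbInd_mul_mul_orbAvg (hπ : ∀ x, π x ≠ 0) (B : Matrix (Fin k) (Fin k) ℝ) :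
    klDiv π (orbInd o * B * orbAvg π o) (Pimat π)
      = ∑ j, orbMass π o j * ent (orbMass π o) (fun i => B i j / orbMass π o j) := by
  set G : Fin k → Fin k → ℝ := fun i j =>
    B i j / orbMass π o j * Real.log (B i j / orbMass π o j)
  have hterm : ∀ x z, π x * (orbInd o * B * orbAvg π o) x z
      * Real.log ((orbInd o * B * orbAvg π o) x z / Pimat π x z) = π z * (π x * G (o x) (o z)) := by
    intro x z
    have harg : B (o x) (o z) * π z / orbMass π o (o z) / Pimat π x z
        = B (o x) (o z) / orbMass π o (o z) := by
      rw [Pimat, of_apply, div_div, mul_comm (orbMass π o _), ← div_div, mul_div_cancel_right₀ _ (hπ z)]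
    rw [orbInd_mul_mul_orbAvg_apply, harg]
    ring
  calc klDiv π (orbInd o * B * orbAvg π o) (Pimat π) = ∑ z, π z * ∑ x, π x * G (o x) (o z) := by
        simp only [klDiv, hterm, Finset.mul_sum]
        exact Finset.sum_comm
    _ = ∑ z, π z * ∑ i, orbMass π o i * G i (o z) := by
        exact Finset.sum_congr rfl fun z _ =>
          congrArg (π z * ·) (sum_mul_comp_eq_sum_orbMass_mul π o fun i => G i (o z))
    _ = _ := sum_mul_comp_eq_sum_orbMass_mul π o fun j => ∑ i, orbMass π o i * G i j

theorem orbMass_mul_projChain {i : Fin k} (hw : orbMass π o i ≠ 0) (P : Matrix X X ℝ) (j : Fin k) :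
    orbMass π o i * projChain π o P i j
      = ∑ x with o x = i, ∑ y with o y = j, π x * P x y := by
  rw [projChain, of_apply, ← mul_assoc, mul_one_div_cancel hw, one_mul]

theorem isReversible_projChain {P : Matrix X X ℝ} (hπ : ∀ x, 0 ≤ π x)
    (hw : ∀ i, 0 < orbMass π o i) (hP : IsReversible π P) :
    IsReversible (orbMass π o) (projChain π o P) := by
  refine ⟨⟨fun i j => ?_, fun i => ?_⟩, fun i j => ?_⟩
  · exact mul_nonneg (one_div_nonneg.2 (hw i).le) (Finset.sum_nonneg fun x _ =>
      Finset.sum_nonneg fun y _ => mul_nonneg (hπ x) (hP.1.1 x y))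
  · rw [← mul_right_inj' (hw i).ne', Finset.mul_sum, mul_one]
    simp only [orbMass_mul_projChain (hw i).ne']
    rw [Finset.sum_comm, orbMass]
    refine Finset.sum_congr rfl fun x _ => ?_
    rw [Finset.sum_fiberwise, ← Finset.mul_sum, hP.1.2 x, mul_one]
  · rw [orbMass_mul_projChain (hw i).ne', orbMass_mul_projChain (hw j).ne', Finset.sum_comm]
    exact Finset.sum_congr rfl fun y _ => Finset.sum_congr rfl fun x _ => hP.2 x y

end Orbits

/-- D_KL^π((GPG)^l ‖ Π) ≤ (1 − α(P̄²))^l · H(π̄). -/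
theorem stmt2 [Fintype X] [DecidableEq X] {k : ℕ} (π : X → ℝ) (o : X → Fin k)
    (hπ : ∀ x, 0 < π x) (hsum : ∑ x, π x = 1) (ho : Function.Surjective o)
    (P : Matrix X X ℝ) (hP : IsReversible π P) (l : ℕ) (hl : 0 < l) :
    klDiv π ((gibbs π o * P * gibbs π o) ^ l) (Pimat π)
      ≤ (1 - logSobolev (orbMass π o) ((projChain π o P) ^ 2)) ^ l
          * shannonEnt (orbMass π o) := by
  obtain ⟨n, rfl⟩ := Nat.exists_eq_add_one_of_ne_zero hl.ne'
  have hw : ∀ i, 0 < orbMass π o i := orbMass_pos hπ ho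
  have hw1 : ∑ i, orbMass π o i = 1 := (sum_orbMass π o).trans hsum
  rw [gibbs_mul_mul_gibbs_pow (fun i => (hw i).ne'),
    klDiv_orbInd_mul_mul_orbAvg fun x => (hπ x).ne']
  exact (isReversible_projChain (fun x => (hπ x).le) hw hP).sum_mul_ent_pow_col_div_le hw hw1 _

end
end GpgStmt
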